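/- Let S be a compact set of symmetric matrices in ℝ^{n×n} such that 𝒜(P) = A − B R⁻¹ Bᵀ P is Hurwitz for every P ∈ S. For P ∈ S define the Newton step 𝒩(P) as the unique solution Y of the Lyapunov equation 𝒜(P)ᵀY + Y𝒜(P) = 𝓡(P), where 𝓡(P) = Q + AᵀP + PA − P B R⁻¹ Bᵀ P. Then there exists L ≥ 0 such that ‖𝒩(P¹) − 𝒩(P²)‖_F ≤ L‖P¹ − P²‖_F for all P¹, P² ∈ S. -/

import Mathlib

open Matrix MeasureTheory Filter NormedSpace
open scoped Kronecker

noncomputable section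

/-- A real square matrix is Hurwitz if every eigenvalue over `ℂ` has negative real part. -/
def IsHurwitz {n : Type*} [Fintype n] [DecidableEq n] (X : Matrix n n ℝ) : Prop :=
  ∀ μ ∈ spectrum ℂ (X.map (algebraMap ℝ ℂ)), μ.re < 0

/-- The Frobenius norm of a real matrix. -/
def frobNorm {p q : Type*} [Fintype p] [Fintype q] (X : Matrix p q ℝ) : ℝ :=
  Real.sqrt (∑ i, ∑ j, (X i j) ^ 2)

/-- The spectral (ℓ²-operator) norm of a real matrix. -/
def spec2Norm {p q : Type*} [Fintype p] [Fintype q] [DecidableEq q] (X : Matrix p q ℝ) : ℝ :=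
  ‖LinearMap.toContinuousLinearMap (Matrix.toEuclideanLin X)‖

attribute [local instance] Matrix.normedAddCommGroup Matrix.normedSpace

/-!
For Hurwitz `M` the Lyapunov operator `N ↦ Mᵀ N + N M` is injective, by Sylvester's theorem:
`σ(-Mᵀ) = -σ(M)` lies in the open right half-plane, so it is disjoint from `σ(M)`. Hence the
Newton step is `𝒩(P) = L_{𝒜(P)}⁻¹ 𝓡(P)`. Both `P ↦ L_{𝒜(P)}` and `P ↦ 𝓡(P)` are polynomial and
inversion is smooth on the units of the operator algebra, so `𝒩` is `C¹` near every point of `S`,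
hence locally Lipschitz, hence Lipschitz on the compact set `S`. Finally the sup norm and the
Frobenius norm are equivalent.
-/

namespace Matrix

open Polynomial

theorem aeval_mul_eq_mul_aeval {R : Type*} [CommRing R] {m n : Type*} [Fintype m] [DecidableEq m]
    [Fintype n] [DecidableEq n] {X : Matrix m m R} {Y : Matrix n n R} {N : Matrix m n R}
    (h : X * N = N * Y) (p : R[X]) : aeval X p * N = N * aeval Y p := by
  have hpow : ∀ i : ℕ, X ^ i * N = N * Y ^ i := by
    intro i
    induction i with
    | zero => simp
    | succ i ih => rw [pow_succ, pow_succ, Matrix.mul_assoc, h, ← Matrix.mul_assoc, ih,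
        Matrix.mul_assoc]
  simp only [aeval_eq_sum_range, Matrix.sum_mul, Matrix.mul_sum, Matrix.smul_mul,
    Matrix.mul_smul, hpow]

theorem eq_zero_of_mul_eq_mul_of_disjoint_spectrum {K : Type*} [Field K] [IsAlgClosed K]
    {m n : Type*} [Fintype m] [DecidableEq m] [Fintype n] [DecidableEq n]
    {X : Matrix m m K} {Y : Matrix n n K} {N : Matrix m n K}
    (hXY : Disjoint (spectrum K X) (spectrum K Y)) (h : X * N = N * Y) : N = 0 := by
  cases isEmpty_or_nonempty n
  · exact Subsingleton.elim _ _
  -- spectral mapping: `σ(χ_Y(X)) = χ_Y(σ(X))`, and `χ_Y` vanishes only on `σ(Y)`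
  have hunit : IsUnit (aeval X Y.charpoly) := by
    rw [← spectrum.zero_notMem_iff K, spectrum.map_polynomial_aeval_of_degree_pos _ _
      (by rw [charpoly_degree_eq_dim]; exact_mod_cast Fintype.card_pos)]
    rintro ⟨μ, hμX, hμY⟩
    exact hXY.notMem_of_mem_left hμX (mem_spectrum_iff_isRoot_charpoly.mpr hμY)
  have hzero : aeval X Y.charpoly * N = 0 := by
    rw [aeval_mul_eq_mul_aeval h, aeval_self_charpoly, Matrix.mul_zero]
  rw [← nonsing_inv_mul_cancel_left _ N ((isUnit_iff_isUnit_det _).mp hunit), hzero,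
    Matrix.mul_zero]

theorem spectrum_transpose {K : Type*} [Field K] {n : Type*} [Fintype n] [DecidableEq n]
    (M : Matrix n n K) : spectrum K Mᵀ = spectrum K M := by
  ext μ
  simp only [mem_spectrum_iff_isRoot_charpoly, charpoly_transpose]

theorem eq_zero_of_transpose_mul_add_mul_eq_zero {n : Type*} [Fintype n] [DecidableEq n]
    {M N : Matrix n n ℂ} (hM : ∀ μ ∈ spectrum ℂ M, μ.re < 0) (h : Mᵀ * N + N * M = 0) :
    N = 0 := by
  refine eq_zero_of_mul_eq_mul_of_disjoint_spectrum (X := -Mᵀ) (Y := M) ?_ (by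
    rwa [Matrix.neg_mul, neg_eq_iff_add_eq_zero])
  rw [← spectrum.neg_eq, spectrum_transpose, Set.disjoint_left]
  intro μ hμ hμ'
  have hneg := hM _ (Set.mem_neg.mp hμ)
  rw [Complex.neg_re] at hneg
  linarith [hM μ hμ']

end Matrix

theorem IsHurwitz.eq_zero_of_transpose_mul_add_mul_eq_zero {n : Type*} [Fintype n]
    [DecidableEq n] {M N : Matrix n n ℝ} (hM : IsHurwitz M) (h : Mᵀ * N + N * M = 0) :
    N = 0 := by
  have hC : (M.map (algebraMap ℝ ℂ))ᵀ * N.map (algebraMap ℝ ℂ) +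
      N.map (algebraMap ℝ ℂ) * M.map (algebraMap ℝ ℂ) = 0 := by
    rw [← transpose_map, ← Matrix.map_mul, ← Matrix.map_mul, ← Matrix.map_add _ (map_add _), h,
      Matrix.map_zero _ (map_zero _)]
  have := Matrix.eq_zero_of_transpose_mul_add_mul_eq_zero hM hC
  ext i j
  simpa using congrFun (congrFun this i) j

section Smoothness

variable {𝕜 E F : Type*} [RCLike 𝕜] [NormedAddCommGroup E] [NormedSpace 𝕜 E]
  [NormedAddCommGroup F] [NormedSpace 𝕜 F]

theorem IsCompact.exists_lipschitzOnWith_of_contDiffAt {S : Set E} (hS : IsCompact S)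
    {f : E → F} (hf : ∀ x ∈ S, ContDiffAt 𝕜 1 f x) : ∃ K, LipschitzOnWith K f S := by
  refine LocallyLipschitzOn.exists_lipschitzOnWith_of_compact hS fun x hx => ?_
  obtain ⟨K, t, ht, hK⟩ := (hf x hx).exists_lipschitzOnWith
  exact ⟨K, t, mem_nhdsWithin_of_mem_nhds ht, hK⟩

theorem contDiffAt_ringInverse_apply [FiniteDimensional 𝕜 F] {T : E → F →L[𝕜] F} {Z : E → F}
    {x : E} (hT : ∀ y, ContDiff 𝕜 1 fun x => T x y) (hZ : ContDiffAt 𝕜 1 Z x)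
    (hx : IsUnit (T x)) : ContDiffAt 𝕜 1 (fun x => Ring.inverse (T x) (Z x)) x := by
  have : CompleteSpace F := FiniteDimensional.complete 𝕜 F
  obtain ⟨u, hu⟩ := hx
  have hinv : ContDiffAt 𝕜 1 Ring.inverse (T x) := hu ▸ contDiffAt_ringInverse 𝕜 u
  exact (hinv.comp x (contDiff_clm_apply_iff.mpr hT).contDiffAt).clm_apply hZ

variable {l m p : Type*} [Fintype l] [Fintype m] [Fintype p] {k : WithTop ℕ∞}

@[fun_prop]
theorem ContDiff.matrix_mul {f : E → Matrix l m 𝕜} {g : E → Matrix m p 𝕜}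
    (hf : ContDiff 𝕜 k f) (hg : ContDiff 𝕜 k g) : ContDiff 𝕜 k fun x => f x * g x := by
  refine contDiff_pi.mpr fun i => contDiff_pi.mpr fun j => ?_
  simp only [Matrix.mul_apply]
  exact ContDiff.sum fun r _ => (contDiff_pi.mp (contDiff_pi.mp hf i) r).mul
    (contDiff_pi.mp (contDiff_pi.mp hg r) j)

@[fun_prop]
theorem ContDiff.matrix_transpose {f : E → Matrix l m 𝕜} (hf : ContDiff 𝕜 k f) :
    ContDiff 𝕜 k fun x => (f x)ᵀ :=
  contDiff_pi.mpr fun i => contDiff_pi.mpr fun j => contDiff_pi.mp (contDiff_pi.mp hf j) i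

end Smoothness

section LyapunovOperator

variable {n : Type*} [Fintype n] [DecidableEq n]

def lyapunovOp (M : Matrix n n ℝ) : Matrix n n ℝ →L[ℝ] Matrix n n ℝ :=
  (LinearMap.mulLeft ℝ Mᵀ + LinearMap.mulRight ℝ M).toContinuousLinearMap

@[simp]
theorem lyapunovOp_apply (M N : Matrix n n ℝ) : lyapunovOp M N = Mᵀ * N + N * M := rfl

theorem IsHurwitz.isUnit_lyapunovOp {M : Matrix n n ℝ} (hM : IsHurwitz M) :
    IsUnit (lyapunovOp M) := by
  have hinj : Function.Injective (lyapunovOp M) := fun N₁ N₂ h =>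
    sub_eq_zero.mp (hM.eq_zero_of_transpose_mul_add_mul_eq_zero <| by
      rw [← lyapunovOp_apply, map_sub, h, sub_self])
  exact ContinuousLinearMap.isUnit_iff_bijective.mpr
    ⟨hinj, LinearMap.injective_iff_surjective.mp hinj⟩

-- `Ring.inverse` makes this `0` when `lyapunovOp M` is not invertible.
def lyapunovSolve (M Z : Matrix n n ℝ) : Matrix n n ℝ :=
  Ring.inverse (lyapunovOp M) Z

theorem IsHurwitz.eq_lyapunovSolve {M N Z : Matrix n n ℝ} (hM : IsHurwitz M)
    (h : Mᵀ * N + N * M = Z) : N = lyapunovSolve M Z := by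
  rw [← h, lyapunovSolve, ← lyapunovOp_apply]
  exact (congrArg (· N) (Ring.inverse_mul_cancel _ hM.isUnit_lyapunovOp)).symm

theorem IsCompact.exists_lipschitzOnWith_lyapunovSolve {E : Type*} [NormedAddCommGroup E]
    [NormedSpace ℝ E] {S : Set E} (hS : IsCompact S) {M Z : E → Matrix n n ℝ}
    (hM : ContDiff ℝ 1 M) (hZ : ContDiff ℝ 1 Z) (hMS : ∀ x ∈ S, IsHurwitz (M x)) :
    ∃ K, LipschitzOnWith K (fun x => lyapunovSolve (M x) (Z x)) S := by
  have hT : ∀ N, ContDiff ℝ 1 fun x => lyapunovOp (M x) N := fun N => by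
    simp only [lyapunovOp_apply]; fun_prop
  exact hS.exists_lipschitzOnWith_of_contDiffAt fun x hx =>
    contDiffAt_ringInverse_apply hT hZ.contDiffAt (hMS x hx).isUnit_lyapunovOp

end LyapunovOperator

section FrobeniusNorm

variable {p q : Type*} [Fintype p] [Fintype q]

theorem norm_le_frobNorm (X : Matrix p q ℝ) : ‖X‖ ≤ frobNorm X := by
  refine (Matrix.norm_le_iff (Real.sqrt_nonneg _)).mpr fun i j => ?_
  rw [Real.norm_eq_abs, ← Real.sqrt_sq_eq_abs]
  refine Real.sqrt_le_sqrt ((Finset.single_le_sum (f := fun j => X i j ^ 2)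
    (fun _ _ => sq_nonneg _) (Finset.mem_univ j)).trans ?_)
  exact Finset.single_le_sum (f := fun i => ∑ j, X i j ^ 2)
    (fun _ _ => Finset.sum_nonneg fun _ _ => sq_nonneg _) (Finset.mem_univ i)

theorem frobNorm_le_sqrt_card_mul_norm (X : Matrix p q ℝ) :
    frobNorm X ≤ √(Fintype.card p * Fintype.card q) * ‖X‖ := by
  rw [← Real.sqrt_sq (norm_nonneg X), ← Real.sqrt_mul (by positivity)]
  refine Real.sqrt_le_sqrt ?_
  calc ∑ i, ∑ j, X i j ^ 2 ≤ ∑ _i : p, ∑ _j : q, ‖X‖ ^ 2 :=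
        Finset.sum_le_sum fun i _ => Finset.sum_le_sum fun j _ => by
          rw [← sq_abs, ← Real.norm_eq_abs]
          exact pow_le_pow_left₀ (norm_nonneg _) (norm_entry_le_entrywise_sup_norm X) 2
    _ = Fintype.card p * Fintype.card q * ‖X‖ ^ 2 := by
        simp only [Finset.sum_const, Finset.card_univ, nsmul_eq_mul]; ring

end FrobeniusNorm

theorem newton_step_lipschitz_on_compact_general
    (n m : ℕ)
    (A : Matrix (Fin n) (Fin n) ℝ) (B : Matrix (Fin n) (Fin m) ℝ)
    (Q : Matrix (Fin n) (Fin n) ℝ) (R : Matrix (Fin m) (Fin m) ℝ)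
    (S : Set (Matrix (Fin n) (Fin n) ℝ)) (hScompact : IsCompact S)
    (hSHur : ∀ P ∈ S, IsHurwitz (A - B * R⁻¹ * Bᵀ * P)) :
    ∃ L : ℝ, 0 ≤ L ∧ ∀ P₁ ∈ S, ∀ P₂ ∈ S,
      ∀ N₁ N₂ : Matrix (Fin n) (Fin n) ℝ,
        (A - B * R⁻¹ * Bᵀ * P₁)ᵀ * N₁ + N₁ * (A - B * R⁻¹ * Bᵀ * P₁)
            = Q + Aᵀ * P₁ + P₁ * A - P₁ * B * R⁻¹ * Bᵀ * P₁ →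
        (A - B * R⁻¹ * Bᵀ * P₂)ᵀ * N₂ + N₂ * (A - B * R⁻¹ * Bᵀ * P₂)
            = Q + Aᵀ * P₂ + P₂ * A - P₂ * B * R⁻¹ * Bᵀ * P₂ →
        frobNorm (N₁ - N₂) ≤ L * frobNorm (P₁ - P₂) := by
  obtain ⟨K, hK⟩ := hScompact.exists_lipschitzOnWith_lyapunovSolve
    (M := fun P => A - B * R⁻¹ * Bᵀ * P)
    (Z := fun P => Q + Aᵀ * P + P * A - P * B * R⁻¹ * Bᵀ * P) (by fun_prop) (by fun_prop) hSHur
  refine ⟨n * K, by positivity, fun P₁ h₁ P₂ h₂ N₁ N₂ e₁ e₂ => ?_⟩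
  rw [(hSHur P₁ h₁).eq_lyapunovSolve e₁, (hSHur P₂ h₂).eq_lyapunovSolve e₂]
  have hLip := lipschitzOnWith_iff_dist_le_mul.mp hK P₁ h₁ P₂ h₂
  rw [dist_eq_norm, dist_eq_norm] at hLip
  refine (frobNorm_le_sqrt_card_mul_norm _).trans ?_
  rw [Fintype.card_fin, Real.sqrt_mul_self (Nat.cast_nonneg n), mul_assoc]
  gcongr
  exact hLip.trans (by gcongr; exact norm_le_frobNorm _)

/-- the Newton step `𝒩(P) = L_{𝒜(P)}⁻¹(𝓡(P))` is Lipschitz on a compact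
set of symmetric matrices on which `𝒜(P)` is Hurwitz. -/
theorem newton_step_lipschitz_on_compact
    (n m : ℕ) (hn : 0 < n) (hm : 0 < m)
    (A : Matrix (Fin n) (Fin n) ℝ) (B : Matrix (Fin n) (Fin m) ℝ)
    (Q : Matrix (Fin n) (Fin n) ℝ) (R : Matrix (Fin m) (Fin m) ℝ)
    (hQ : Q.PosSemidef) (hR : R.PosDef)
    (S : Set (Matrix (Fin n) (Fin n) ℝ)) (hScompact : IsCompact S)
    (hSsymm : ∀ P ∈ S, P.IsSymm)
    (hSHur : ∀ P ∈ S, IsHurwitz (A - B * R⁻¹ * Bᵀ * P)) :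
    ∃ L : ℝ, 0 ≤ L ∧ ∀ P₁ ∈ S, ∀ P₂ ∈ S,
      ∀ N₁ N₂ : Matrix (Fin n) (Fin n) ℝ,
        (A - B * R⁻¹ * Bᵀ * P₁)ᵀ * N₁ + N₁ * (A - B * R⁻¹ * Bᵀ * P₁)
            = Q + Aᵀ * P₁ + P₁ * A - P₁ * B * R⁻¹ * Bᵀ * P₁ →
        (A - B * R⁻¹ * Bᵀ * P₂)ᵀ * N₂ + N₂ * (A - B * R⁻¹ * Bᵀ * P₂)
            = Q + Aᵀ * P₂ + P₂ * A - P₂ * B * R⁻¹ * Bᵀ * P₂ →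
        frobNorm (N₁ - N₂) ≤ L * frobNorm (P₁ - P₂) :=
  newton_step_lipschitz_on_compact_general n m A B Q R S hScompact hSHur
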